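/- arXiv:1602.02372 — 2 statements merged into one kernel-verified Lean document; each statement's English description precedes it below -/
import Mathlib

section
/- The N-dimensional demihypercube (N ≥ 4) has exactly 2^{N-1} + 2N facets: 2N facets supported on the hyperplanes α_i = ±1/2, and 2^{N-1} facets supported on the hyperplanes H_I = 1 for I of even cardinality. -/
/-!
A facet `F` is cut out by a functional `x ↦ c ⬝ᵥ x` whose maximum `b` over the demicube is attained
exactly on `F`; its vertices are the `vtx J`, `J` odd, maximizing `c ⬝ᵥ vtx J`, and since `F` has
dimension `N - 1` its direction is all of `ker c`. Two observations drive the classification.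
Flipping two coordinates of a maximizing `J` keeps `J` odd, so no two single-coordinate flips can
both increase `c ⬝ᵥ vtx J`. And if all maximizing vertices agree in a coordinate `k`, then
`ker c ⊆ {x | x k = 0}`, so `c` is a multiple of the `k`-th coordinate functional.

If `c` has a zero coordinate, the first observation makes all maximizers agree wherever `c` is
nonzero, and the facet is `α k = ±1/2`. Otherwise, with `P = {c > 0}`, every maximizer is `P` or
some `P ∆ {a}`; the second observation forces every `P ∆ {a}` to be a maximizer, so `c` is
proportional to the sign vector of `P`, `P` is even, and the facet is `H_P = 1`. Conversely the
vertices on each of these hyperplanes span its direction (for `α i = ±1/2` this needs `N ≥ 4`), and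
distinct hyperplanes carry distinct sets of vertices.
-/

open Finset

/-- Vertex `v_I` of the hypercube `[-1/2,1/2]^N`. -/
noncomputable def vtx {N : ℕ} (I : Finset (Fin N)) : Fin N → ℝ :=
  fun i => if i ∈ I then 1/2 else -(1/2)

/-- The affine function `H_I(α) = Σ_{j∉I}(1/2 + α_j) + Σ_{i∈I}(1/2 - α_i)`. -/
noncomputable def Hfun {N : ℕ} (I : Finset (Fin N)) (α : Fin N → ℝ) : ℝ :=
  ∑ j ∈ Iᶜ, (1/2 + α j) + ∑ i ∈ I, (1/2 - α i)

/-- The demihypercube: convex hull of the odd vertices of `[-1/2,1/2]^N`. -/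
noncomputable def demicube (N : ℕ) : Set (Fin N → ℝ) :=
  convexHull ℝ {x : Fin N → ℝ | ∃ I : Finset (Fin N), Odd I.card ∧ x = vtx I}

/-- The facets of the demihypercube: exposed faces of affine dimension `N-1`. -/
noncomputable def demicubeFacets (N : ℕ) : Set (Set (Fin N → ℝ)) :=
  {F | IsExposed ℝ (demicube N) F ∧ F.Nonempty ∧ F ≠ demicube N ∧
    Module.finrank ℝ (vectorSpan ℝ F) = N - 1}

open scoped symmDiff

section ExposedFaces

variable {𝕜 E : Type*} [TopologicalSpace 𝕜] [Ring 𝕜] [PartialOrder 𝕜] [AddCommMonoid E]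
  [TopologicalSpace E] [Module 𝕜 E] {A B : Set E}

theorem IsExposed.exists_eq_inter_eq (hAB : IsExposed 𝕜 A B) (hB : B.Nonempty) :
    ∃ (l : StrongDual 𝕜 E) (b : 𝕜), (∀ x ∈ A, l x ≤ b) ∧ B = A ∩ {x | l x = b} := by
  obtain ⟨l, rfl⟩ := hAB hB
  obtain ⟨w, hwA, hw⟩ := hB
  refine ⟨l, l w, fun x hx => hw x hx, Set.ext fun x => ⟨fun hx => ⟨hx.1, ?_⟩, fun hx => ?_⟩⟩
  · exact le_antisymm (hw x hx.1) (hx.2 w hwA)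
  · exact ⟨hx.1, fun y hy => hx.2 ▸ hw y hy⟩

theorem isExposed_inter_eq_of_le (l : StrongDual 𝕜 E) {b : 𝕜} (h : ∀ x ∈ A, l x ≤ b) :
    IsExposed 𝕜 A (A ∩ {x | l x = b}) := by
  rintro ⟨w, hwA, hw⟩
  refine ⟨l, Set.ext fun x => ⟨fun hx => ⟨hx.1, fun y hy => hx.2 ▸ h y hy⟩, fun hx => ?_⟩⟩
  exact ⟨hx.1, le_antisymm (h x hx.1) (hw ▸ hx.2 w hwA)⟩

end ExposedFaces

theorem convexHull_inter_eq_of_le {𝕜 E : Type*} [Field 𝕜] [LinearOrder 𝕜] [IsStrictOrderedRing 𝕜]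
    [AddCommGroup E] [Module 𝕜 E] (s : Set E) (ℓ : E →ₗ[𝕜] 𝕜) {b : 𝕜}
    (h : ∀ x ∈ s, ℓ x ≤ b) :
    convexHull 𝕜 s ∩ {x | ℓ x = b} = convexHull 𝕜 (s ∩ {x | ℓ x = b}) := by
  classical
  refine Set.Subset.antisymm ?_ (Set.subset_inter (convexHull_mono Set.inter_subset_left)
    (convexHull_min Set.inter_subset_right (convex_hyperplane ℓ.isLinear b)))
  rintro _ ⟨hx, hxb⟩
  rw [_root_.convexHull_eq] at hx
  obtain ⟨ι, t, w, z, hw₀, hw₁, hz, rfl⟩ := hx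
  -- the defect `b - ℓ x` is a convex combination of the nonnegative defects `b - ℓ (z i)`
  have hdefect : ∑ i ∈ t, w i * (b - ℓ (z i)) = 0 := by
    have hℓ : ℓ (t.centerMass w z) = ∑ i ∈ t, w i * ℓ (z i) := by
      simp [t.centerMass_eq_of_sum_1 z hw₁]
    simp only [mul_sub, sum_sub_distrib, ← sum_mul, hw₁, one_mul, ← hℓ, hxb.out, sub_self]
  have hzero := (sum_eq_zero_iff_of_nonneg fun i hi =>
    mul_nonneg (hw₀ i hi) (sub_nonneg.2 (h _ (hz i hi)))).1 hdefect
  rw [← t.centerMass_filter_ne_zero]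
  refine centerMass_mem_convexHull _ (fun i hi => hw₀ i (mem_filter.1 hi).1)
    (by rw [sum_filter_ne_zero, hw₁]; exact one_pos) fun i hi => ?_
  obtain ⟨hit, hwi⟩ := mem_filter.1 hi
  exact ⟨hz i hit, (sub_eq_zero.1 ((mul_eq_zero.1 (hzero i hit)).resolve_left hwi)).symm⟩

theorem vectorSpan_le_ker_of_subset {k V M : Type*} [Ring k] [AddCommGroup V] [Module k V]
    [AddCommGroup M] [Module k M] {s : Set V} (ℓ : V →ₗ[k] M) {r : M}
    (hs : s ⊆ {x | ℓ x = r}) : vectorSpan k s ≤ LinearMap.ker ℓ := by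
  rw [vectorSpan_def, Submodule.span_le]
  rintro _ ⟨x, hx, y, hy, rfl⟩
  simp [(hs hx).out, (hs hy).out]

theorem Submodule.mem_of_add_mem_of_add_mem {K V : Type*} [Field K] [NeZero (2 : K)]
    [AddCommGroup V] [Module K V] (M : Submodule K V) {u v w : V} (huv : u + v ∈ M)
    (huw : u + w ∈ M) (hvw : v + w ∈ M) : u ∈ M := by
  have hu : u = (2 : K)⁻¹ • ((u + v) + (u + w) - (v + w)) := by
    rw [show (u + v) + (u + w) - (v + w) = (2 : K) • u by rw [two_smul]; abel, smul_smul,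
      inv_mul_cancel₀ two_ne_zero, one_smul]
  rw [hu]
  exact M.smul_mem _ (M.sub_mem (M.add_mem huv huw) hvw)

section DotProduct

variable {R n : Type*} [Fintype n] [DecidableEq n]

theorem Submodule.mem_of_forall_ne_single_mem [Semiring R] (M : Submodule R (n → R)) {i : n}
    (h : ∀ a ≠ i, Pi.single a 1 ∈ M) {x : n → R} (hx : x i = 0) : x ∈ M := by
  rw [← univ_sum_single x]
  refine M.sum_mem fun a _ => ?_
  rcases eq_or_ne a i with rfl | ha
  · simp [hx]
  · simpa [← Pi.single_smul] using M.smul_mem (x a) (h a ha)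

theorem apply_eq_zero_of_dotProduct_eq_zero_imp [CommRing R] {c : n → R} {k k' : n}
    (h : ∀ v, c ⬝ᵥ v = 0 → v k = 0) (hk : k' ≠ k) : c k' = 0 := by
  have := h (c k' • Pi.single k 1 - c k • Pi.single k' 1) (by simp [mul_comm])
  simpa [hk.symm] using this

theorem finrank_ker_dotProductEquiv {K : Type*} [Field K] {c : n → K} (hc : c ≠ 0) :
    Module.finrank K (LinearMap.ker (dotProductEquiv K n c)) = Fintype.card n - 1 := by
  have := Module.Dual.finrank_ker_add_one_of_ne_zero
    ((dotProductEquiv K n).map_ne_zero_iff.2 hc)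
  rw [Module.finrank_fintype_fun_eq_card] at this
  omega

theorem exists_dotProduct_eq (l : StrongDual ℝ (n → ℝ)) : ∃ c : n → ℝ, ∀ x, l x = c ⬝ᵥ x :=
  ⟨(dotProductEquiv ℝ n).symm l, fun x => by
    rw [← dotProductEquiv_apply_apply, LinearEquiv.apply_symm_apply]; rfl⟩

end DotProduct

namespace Finset

variable {α : Type*} [DecidableEq α]

theorem card_symmDiff_add_two_mul_card_inter (s t : Finset α) :
    #(s ∆ t) + 2 * #(s ∩ t) = #s + #t := by
  rw [symmDiff_def, sup_eq_union, card_union_of_disjoint disjoint_sdiff_sdiff]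
  have := card_sdiff_add_card_inter s t
  have := card_sdiff_add_card_inter t s
  rw [inter_comm t s] at this
  omega

theorem even_card_symmDiff_iff (s t : Finset α) :
    Even #(s ∆ t) ↔ (Even #s ↔ Even #t) := by
  rw [← Nat.even_add, ← card_symmDiff_add_two_mul_card_inter, Nat.even_add]
  simp

theorem eq_empty_of_forall_card_symmDiff_singleton_eq_one [Fintype α]
    (hα : 3 ≤ Fintype.card α) {D : Finset α} (h : ∀ a, #(D ∆ {a}) = 1) : D = ∅ := by
  have hcard : ∀ a, #(D ∆ {a}) + 2 * #(D ∩ {a}) = #D + 1 := fun a => by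
    simpa using card_symmDiff_add_two_mul_card_inter D {a}
  rcases D.eq_empty_or_nonempty with hD | ⟨d, hd⟩
  · exact hD
  have h2 : #D = 2 := by
    have := hcard d
    rw [h, inter_singleton_of_mem hd, card_singleton] at this
    omega
  obtain ⟨a, ha⟩ : ∃ a, a ∉ D := by
    by_contra! hall
    rw [eq_univ_of_forall hall, card_univ] at h2
    omega
  have := hcard a
  rw [h, inter_singleton_of_notMem ha, card_empty] at this
  omega

theorem exists_mem_symmDiff_singleton_iff [Nontrivial α] (s : Finset α) (i : α) (p : Prop) :
    ∃ a, (i ∈ s ∆ {a} ↔ p) := by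
  by_cases h : i ∈ s ↔ p
  · obtain ⟨a, ha⟩ := exists_ne i
    exact ⟨a, by simp [mem_symmDiff, ha.symm, h]⟩
  · exact ⟨i, by simp [mem_symmDiff]; tauto⟩

theorem exists_ne_ne [Fintype α] (hα : 4 ≤ Fintype.card α) (i a : α) :
    ∃ b b' : α, b ≠ b' ∧ b ≠ i ∧ b ≠ a ∧ b' ≠ i ∧ b' ≠ a := by
  have : 1 < #({i, a}ᶜ : Finset α) := by
    have := card_le_two (a := i) (b := a)
    rw [card_compl]
    omega
  obtain ⟨b, hb, b', hb', hbb'⟩ := one_lt_card.1 this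
  simp only [mem_compl, mem_insert, mem_singleton, not_or] at hb hb'
  exact ⟨b, b', hbb', hb.1, hb.2, hb'.1, hb'.2⟩

end Finset

theorem Nat.card_finset_even_card {α : Type*} [Fintype α] [DecidableEq α] [Nonempty α] :
    Nat.card {s : Finset α // Even #s} = 2 ^ (Fintype.card α - 1) := by
  obtain ⟨a⟩ := ‹Nonempty α›
  have e : {s : Finset α // Even #s} ≃ {s : Finset α // ¬Even #s} :=
    ((symmDiff_left_involutive {a}).toPerm _).subtypeEquiv fun s => by
      simp [even_card_symmDiff_iff]
  have h := Fintype.card_subtype_compl fun s : Finset α => Even #s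
  rw [← Fintype.card_congr e, Fintype.card_finset] at h
  have hpow : 2 ^ Fintype.card α = 2 * 2 ^ (Fintype.card α - 1) := by
    rw [← pow_succ']; congr 1; have := Fintype.card_pos (α := α); omega
  rw [Nat.card_eq_fintype_card]
  omega

namespace Demicube

variable {N : ℕ} {c : Fin N → ℝ} {b : ℝ}

noncomputable def signVec (J : Finset (Fin N)) : Fin N → ℝ := fun i => if i ∈ J then -1 else 1

theorem signVec_mul_self (J : Finset (Fin N)) (a : Fin N) : signVec J a * signVec J a = 1 := by
  unfold signVec; split_ifs <;> norm_num

theorem signVec_symmDiff_singleton_of_ne (J : Finset (Fin N)) {a a' : Fin N} (h : a' ≠ a) :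
    signVec (J ∆ {a}) a' = signVec J a' := by
  simp [signVec, mem_symmDiff, h]

theorem vtx_symmDiff_singleton (J : Finset (Fin N)) (a : Fin N) :
    vtx (J ∆ {a}) = vtx J + signVec J a • Pi.single a 1 := by
  funext i
  rcases eq_or_ne i a with rfl | h
  · by_cases hi : i ∈ J <;> simp [vtx, signVec, mem_symmDiff, hi] <;> norm_num
  · simp [vtx, mem_symmDiff, h]

theorem Hfun_eq_dotProduct (I : Finset (Fin N)) (x : Fin N → ℝ) :
    Hfun I x = N / 2 + signVec I ⬝ᵥ x := by
  have h : Hfun I x = ∑ j, (1 / 2 + signVec I j * x j) := by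
    rw [Hfun, ← sum_compl_add_sum I]
    congr 1 <;> refine sum_congr rfl fun j hj => ?_
    · simp [signVec, (mem_compl.1 hj)]
    · simp [signVec, hj, sub_eq_add_neg]
  rw [h, sum_add_distrib, dotProduct]
  simp [div_eq_mul_inv]

theorem Hfun_vtx (I J : Finset (Fin N)) : Hfun I (vtx J) = #(I ∆ J) := by
  have h : ∀ j, signVec I j * vtx J j = (if j ∈ I ∆ J then 1 else 0) - 1 / 2 := by
    intro j
    by_cases hI : j ∈ I <;> by_cases hJ : j ∈ J <;> simp [signVec, vtx, mem_symmDiff, hI, hJ] <;>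
      norm_num
  rw [Hfun_eq_dotProduct, dotProduct, sum_congr rfl fun j _ => h j, sum_sub_distrib, sum_boole]
  simp
  ring

theorem vtx_mem_demicube {J : Finset (Fin N)} (hJ : Odd #J) : vtx J ∈ demicube N :=
  subset_convexHull ℝ _ ⟨J, hJ, rfl⟩

theorem dotProduct_le_of_mem_demicube (hmax : ∀ J : Finset (Fin N), Odd #J → c ⬝ᵥ vtx J ≤ b)
    {x : Fin N → ℝ} (hx : x ∈ demicube N) : c ⬝ᵥ x ≤ b := by
  refine convexHull_min ?_ (convex_halfSpace_le (dotProductEquiv ℝ (Fin N) c).isLinear b) hx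
  rintro _ ⟨J, hJ, rfl⟩
  exact hmax J hJ

theorem demicube_inter_eq (hmax : ∀ J : Finset (Fin N), Odd #J → c ⬝ᵥ vtx J ≤ b) :
    demicube N ∩ {x | c ⬝ᵥ x = b} = convexHull ℝ (vtx '' {J | Odd #J ∧ c ⬝ᵥ vtx J = b}) := by
  have h := convexHull_inter_eq_of_le {x | ∃ J : Finset (Fin N), Odd #J ∧ x = vtx J}
    (dotProductEquiv ℝ (Fin N) c) (b := b) (by rintro _ ⟨J, hJ, rfl⟩; exact hmax J hJ)
  simp only [dotProductEquiv_apply_apply] at h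
  rw [demicube, h]
  congr 1
  ext x
  constructor
  · rintro ⟨⟨J, hJ, rfl⟩, hJb⟩; exact ⟨J, ⟨hJ, hJb⟩, rfl⟩
  · rintro ⟨J, ⟨hJ, hJb⟩, rfl⟩; exact ⟨⟨J, hJ, rfl⟩, hJb⟩

theorem isExposed_demicube_inter (hmax : ∀ J : Finset (Fin N), Odd #J → c ⬝ᵥ vtx J ≤ b) :
    IsExposed ℝ (demicube N) (demicube N ∩ {x | c ⬝ᵥ x = b}) := by
  simpa using isExposed_inter_eq_of_le
    (LinearMap.toContinuousLinearMap (dotProductEquiv ℝ (Fin N) c))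
    fun _ hx => dotProduct_le_of_mem_demicube hmax hx

theorem inter_mem_demicubeFacets (hc : c ≠ 0)
    (hmax : ∀ J : Finset (Fin N), Odd #J → c ⬝ᵥ vtx J ≤ b) {J₀ J₁ : Finset (Fin N)}
    (hJ₀ : Odd #J₀) (hJ₀b : c ⬝ᵥ vtx J₀ = b) (hJ₁ : Odd #J₁) (hJ₁b : c ⬝ᵥ vtx J₁ ≠ b)
    (hspan : ∀ x, c ⬝ᵥ x = 0 → x ∈ vectorSpan ℝ (demicube N ∩ {x | c ⬝ᵥ x = b})) :
    demicube N ∩ {x | c ⬝ᵥ x = b} ∈ demicubeFacets N := by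
  refine ⟨isExposed_demicube_inter hmax, ⟨vtx J₀, vtx_mem_demicube hJ₀, hJ₀b⟩,
    fun h => hJ₁b (h ▸ vtx_mem_demicube hJ₁ :).2, ?_⟩
  have : vectorSpan ℝ (demicube N ∩ {x | c ⬝ᵥ x = b}) =
      LinearMap.ker (dotProductEquiv ℝ (Fin N) c) :=
    le_antisymm (vectorSpan_le_ker_of_subset _ Set.inter_subset_right) fun x hx => hspan x hx
  rw [this, finrank_ker_dotProductEquiv hc, Fintype.card_fin]

theorem exists_of_mem_demicubeFacets {F : Set (Fin N → ℝ)} (hF : F ∈ demicubeFacets N) :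
    ∃ (c : Fin N → ℝ) (b : ℝ), c ≠ 0 ∧ (∀ J : Finset (Fin N), Odd #J → c ⬝ᵥ vtx J ≤ b) ∧
      (∀ x, c ⬝ᵥ x = 0 → x ∈ vectorSpan ℝ F) ∧ F = demicube N ∩ {x | c ⬝ᵥ x = b} := by
  obtain ⟨hexp, hne, hproper, hdim⟩ := hF
  obtain ⟨l, b, hle, rfl⟩ := hexp.exists_eq_inter_eq hne
  obtain ⟨c, hl⟩ := exists_dotProduct_eq l
  have hset : {x | l x = b} = {x | c ⬝ᵥ x = b} := by simp only [hl]
  rw [hset] at hne hproper hdim ⊢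
  simp only [hl] at hle
  have hc : c ≠ 0 := by
    rintro rfl
    obtain ⟨x, -, hx⟩ := hne
    exact hproper (Set.inter_eq_left.2 fun y _ => by simpa using hx)
  have hspan : vectorSpan ℝ (demicube N ∩ {x | c ⬝ᵥ x = b}) =
      LinearMap.ker (dotProductEquiv ℝ (Fin N) c) :=
    Submodule.eq_of_le_of_finrank_eq (vectorSpan_le_ker_of_subset _ Set.inter_subset_right)
      (by rw [hdim, finrank_ker_dotProductEquiv hc, Fintype.card_fin])
  exact ⟨c, b, hc, fun J hJ => hle _ (vtx_mem_demicube hJ), fun x hx => hspan ▸ hx, rfl⟩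

/-- `signVec J a * c a` is the gain of `c ⬝ᵥ vtx J` under flipping the coordinate `a`
(`vtx_symmDiff_singleton`); a single flip changes parity, a double flip does not. -/
theorem signVec_mul_add_signVec_mul_nonpos
    (hmax : ∀ J : Finset (Fin N), Odd #J → c ⬝ᵥ vtx J ≤ b) {J : Finset (Fin N)} (hJ : Odd #J)
    (hJb : c ⬝ᵥ vtx J = b) {a a' : Fin N} (ha : a ≠ a') :
    signVec J a * c a + signVec J a' * c a' ≤ 0 := by
  have hodd : Odd #(J ∆ {a} ∆ {a'}) := by
    simpa [← Nat.not_even_iff_odd, even_card_symmDiff_iff] using hJ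
  have := hmax _ hodd
  rw [vtx_symmDiff_singleton, vtx_symmDiff_singleton, signVec_symmDiff_singleton_of_ne J ha.symm]
    at this
  simp only [dotProduct_add, dotProduct_smul, dotProduct_single, smul_eq_mul, mul_one, hJb] at this
  linarith

theorem apply_eq_zero_of_forall_vtx_apply_eq
    (hmax : ∀ J : Finset (Fin N), Odd #J → c ⬝ᵥ vtx J ≤ b)
    (hspan : ∀ x, c ⬝ᵥ x = 0 → x ∈ vectorSpan ℝ (demicube N ∩ {x | c ⬝ᵥ x = b}))
    {k : Fin N} {r : ℝ} (hr : ∀ J : Finset (Fin N), Odd #J → c ⬝ᵥ vtx J = b → vtx J k = r)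
    {k' : Fin N} (hk : k' ≠ k) : c k' = 0 := by
  -- the face lies in `{x | x k = r}`, so its direction `ker c` lies in `{x | x k = 0}`
  let proj : (Fin N → ℝ) →ₗ[ℝ] ℝ := LinearMap.proj k
  have hsub : demicube N ∩ {x | c ⬝ᵥ x = b} ⊆ {x | proj x = r} := by
    rw [demicube_inter_eq hmax]
    refine convexHull_min ?_ (convex_hyperplane proj.isLinear r)
    rintro _ ⟨J, ⟨hJ, hJb⟩, rfl⟩
    exact hr J hJ hJb
  exact apply_eq_zero_of_dotProduct_eq_zero_imp
    (fun v hv => vectorSpan_le_ker_of_subset _ hsub (hspan v hv)) hk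

theorem exists_eq_coordinate_face (hmax : ∀ J : Finset (Fin N), Odd #J → c ⬝ᵥ vtx J ≤ b)
    (hspan : ∀ x, c ⬝ᵥ x = 0 → x ∈ vectorSpan ℝ (demicube N ∩ {x | c ⬝ᵥ x = b}))
    (hc : c ≠ 0) {z : Fin N} (hz : c z = 0) (hne : (demicube N ∩ {x | c ⬝ᵥ x = b}).Nonempty) :
    ∃ i : Fin N, demicube N ∩ {x | c ⬝ᵥ x = b} = demicube N ∩ {x | x i = 1/2} ∨
      demicube N ∩ {x | c ⬝ᵥ x = b} = demicube N ∩ {x | x i = -(1/2)} := by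
  obtain ⟨_, ⟨J₀, ⟨hJ₀, hJ₀b⟩, rfl⟩⟩ : (vtx '' {J | Odd #J ∧ c ⬝ᵥ vtx J = b}).Nonempty := by
    rwa [demicube_inter_eq hmax, convexHull_nonempty_iff] at hne
  obtain ⟨k, hk : c k ≠ 0⟩ := Function.ne_iff.1 hc
  have hside : ∀ J : Finset (Fin N), Odd #J → c ⬝ᵥ vtx J = b → signVec J k * c k ≤ 0 :=
    fun J hJ hJb => by
      simpa [hz] using signVec_mul_add_signVec_mul_nonpos hmax hJ hJb fun h : k = z => hk (h ▸ hz)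
  have hagree : ∀ J : Finset (Fin N), Odd #J → c ⬝ᵥ vtx J = b → vtx J k = vtx J₀ k := by
    intro J hJ hJb
    have h := hside J hJ hJb
    have h₀ := hside J₀ hJ₀ hJ₀b
    simp only [vtx, signVec] at h h₀ ⊢
    split_ifs at h h₀ ⊢ <;> first | rfl | (exfalso; exact hk (by linarith))
  have hsupp : ∀ x, c ⬝ᵥ x = c k * x k := by
    have : c = Pi.single k (c k) := by
      funext k'
      rcases eq_or_ne k' k with rfl | h
      · simp
      · rw [Pi.single_eq_of_ne h]
        exact apply_eq_zero_of_forall_vtx_apply_eq hmax hspan hagree h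
    intro x
    conv_lhs => rw [this]
    rw [single_dotProduct]
  have hface : demicube N ∩ {x | c ⬝ᵥ x = b} = demicube N ∩ {x | x k = vtx J₀ k} := by
    simp only [← hJ₀b, hsupp, mul_right_inj' hk]
  refine ⟨k, ?_⟩
  rw [hface]
  unfold vtx
  split_ifs <;> simp

noncomputable def posSupport (c : Fin N → ℝ) : Finset (Fin N) := {i | 0 < c i}

theorem pos_signVec_mul_iff {a : Fin N} (ha : c a ≠ 0) (J : Finset (Fin N)) :
    0 < signVec J a * c a ↔ a ∈ posSupport c ∆ J := by
  rcases ha.lt_or_gt with h | h <;> by_cases haJ : a ∈ J <;>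
    simp [signVec, posSupport, mem_symmDiff, haJ, h, not_lt.2 h.le]

theorem eq_symmDiff_singleton_of_mem (hmax : ∀ J : Finset (Fin N), Odd #J → c ⬝ᵥ vtx J ≤ b)
    (hc : ∀ a, c a ≠ 0) {J : Finset (Fin N)} (hJ : Odd #J) (hJb : c ⬝ᵥ vtx J = b) {a : Fin N}
    (ha : a ∈ posSupport c ∆ J) : J = posSupport c ∆ {a} := by
  have hsingle : posSupport c ∆ J = {a} := by
    refine eq_singleton_iff_unique_mem.2 ⟨ha, fun a' ha' => by_contra fun hne => ?_⟩
    exact (signVec_mul_add_signVec_mul_nonpos hmax hJ hJb hne).not_gt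
      (add_pos ((pos_signVec_mul_iff (hc a') J).2 ha') ((pos_signVec_mul_iff (hc a) J).2 ha))
  rw [← hsingle, symmDiff_symmDiff_cancel_left]

theorem symmDiff_singleton_mem_face (hN : 2 ≤ N)
    (hmax : ∀ J : Finset (Fin N), Odd #J → c ⬝ᵥ vtx J ≤ b)
    (hspan : ∀ x, c ⬝ᵥ x = 0 → x ∈ vectorSpan ℝ (demicube N ∩ {x | c ⬝ᵥ x = b}))
    (hc : ∀ a, c a ≠ 0) (a : Fin N) :
    Odd #(posSupport c ∆ {a}) ∧ c ⬝ᵥ vtx (posSupport c ∆ {a}) = b := by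
  by_contra hflip
  have : Nontrivial (Fin N) := Fin.nontrivial_iff_two_le.2 hN
  obtain ⟨k', hk'⟩ := exists_ne a
  refine hc k' (apply_eq_zero_of_forall_vtx_apply_eq hmax hspan (r := vtx (posSupport c) a)
    (fun J hJ hJb => ?_) hk')
  have ha : a ∉ posSupport c ∆ J := fun ha =>
    hflip (eq_symmDiff_singleton_of_mem hmax hc hJ hJb ha ▸ ⟨hJ, hJb⟩)
  simp only [vtx, mem_symmDiff, not_or, not_and, not_not] at ha ⊢
  by_cases h : a ∈ J <;> simp [h] at ha ⊢ <;> simp [ha]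

theorem exists_eq_H_face (hN : 2 ≤ N) (hmax : ∀ J : Finset (Fin N), Odd #J → c ⬝ᵥ vtx J ≤ b)
    (hspan : ∀ x, c ⬝ᵥ x = 0 → x ∈ vectorSpan ℝ (demicube N ∩ {x | c ⬝ᵥ x = b}))
    (hc : ∀ a, c a ≠ 0) :
    ∃ I : Finset (Fin N), Even #I ∧
      demicube N ∩ {x | c ⬝ᵥ x = b} = demicube N ∩ {x | Hfun I x = 1} := by
  have hflip := symmDiff_singleton_mem_face hN hmax hspan hc
  set P := posSupport c
  have a₀ : Fin N := ⟨0, by omega⟩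
  -- every flip `P ∆ {a}` is a maximizer, so all gains `signVec P a * c a` equal `μ`
  set μ := b - c ⬝ᵥ vtx P
  have hμ : ∀ a, c a = μ * signVec P a := by
    intro a
    have h := (hflip a).2
    rw [vtx_symmDiff_singleton, dotProduct_add, dotProduct_smul, dotProduct_single, smul_eq_mul,
      mul_one] at h
    calc c a = signVec P a * signVec P a * c a := by rw [signVec_mul_self, one_mul]
      _ = μ * signVec P a := by simp only [μ, ← h]; ring
  have hμ0 : μ ≠ 0 := fun h => hc a₀ (by rw [hμ, h, zero_mul])
  have hcx : ∀ x, c ⬝ᵥ x = μ * (Hfun P x - N / 2) := by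
    intro x
    rw [Hfun_eq_dotProduct, add_sub_cancel_left, dotProduct, dotProduct, mul_sum]
    exact sum_congr rfl fun a _ => by rw [hμ]; ring
  have hb : b = μ * (1 - N / 2) := by
    rw [← (hflip a₀).2, hcx, Hfun_vtx, symmDiff_symmDiff_cancel_left, card_singleton, Nat.cast_one]
  refine ⟨P, ?_, ?_⟩
  · simpa [← Nat.not_even_iff_odd, even_card_symmDiff_iff] using (hflip a₀).1
  · simp only [hcx, hb, mul_right_inj' hμ0, sub_left_inj]

theorem exists_eq_of_mem_demicubeFacets (hN : 2 ≤ N) {F : Set (Fin N → ℝ)}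
    (hF : F ∈ demicubeFacets N) :
    (∃ i : Fin N, F = demicube N ∩ {α | α i = 1/2} ∨ F = demicube N ∩ {α | α i = -(1/2)}) ∨
      ∃ I : Finset (Fin N), Even #I ∧ F = demicube N ∩ {α | Hfun I α = 1} := by
  have hne := hF.2.1
  obtain ⟨c, b, hc, hmax, hspan, rfl⟩ := exists_of_mem_demicubeFacets hF
  by_cases hz : ∀ a, c a ≠ 0
  · exact .inr (exists_eq_H_face hN hmax hspan hz)
  · obtain ⟨z, hz⟩ := not_forall_not.1 hz
    exact .inl (exists_eq_coordinate_face hmax hspan hc hz hne)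

theorem single_add_single_mem_vectorSpan {i : Fin N} {J : Finset (Fin N)} (hJ : Odd #J)
    {a a' : Fin N} (ha : a ≠ a') (haJ : a ∉ J) (ha'J : a' ∉ J) (hai : a ≠ i) (ha'i : a' ≠ i)
    {r : ℝ} (hr : vtx J i = r) :
    Pi.single a 1 + Pi.single a' 1 ∈ vectorSpan ℝ (demicube N ∩ {x | x i = r}) := by
  have hK : vtx (J ∆ {a} ∆ {a'}) = vtx J + (Pi.single a 1 + Pi.single a' 1) := by
    rw [vtx_symmDiff_singleton, vtx_symmDiff_singleton, signVec_symmDiff_singleton_of_ne J ha.symm]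
    simp [signVec, haJ, ha'J, add_assoc]
  have hodd : Odd #(J ∆ {a} ∆ {a'}) := by
    simpa [← Nat.not_even_iff_odd, even_card_symmDiff_iff] using hJ
  have := vsub_mem_vectorSpan ℝ (s := demicube N ∩ {x | x i = r})
    ⟨vtx_mem_demicube hodd, by simp [hK, hai.symm, ha'i.symm, hr]⟩ ⟨vtx_mem_demicube hJ, hr⟩
  rwa [vsub_eq_sub, hK, add_sub_cancel_left] at this

theorem mem_vectorSpan_coordinate_face (hN : 4 ≤ N) {i : Fin N} {r : ℝ}
    (hr : r = 1/2 ∨ r = -(1/2)) {x : Fin N → ℝ} (hx : x i = 0) :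
    x ∈ vectorSpan ℝ (demicube N ∩ {x | x i = r}) := by
  -- `e a = ((e a + e b) + (e a + e b') - (e b + e b')) / 2` with `a, b, b'` distinct from `i`
  refine Submodule.mem_of_forall_ne_single_mem _ (fun a hai => ?_) hx
  obtain ⟨b, b', hbb', hbi, hba, hb'i, hb'a⟩ := exists_ne_ne (by simpa using hN) i a
  rcases hr with rfl | rfl
  · have hpair : ∀ {d d'}, d ≠ d' → d ≠ i → d' ≠ i →
        Pi.single d 1 + Pi.single d' 1 ∈ vectorSpan ℝ (demicube N ∩ {x | x i = 1/2}) :=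
      fun hdd' hdi hd'i => single_add_single_mem_vectorSpan (J := {i}) (by simp) hdd'
        (by simpa using hdi) (by simpa using hd'i) hdi hd'i (by simp [vtx])
    exact Submodule.mem_of_add_mem_of_add_mem _ (hpair hba.symm hai hbi)
      (hpair hb'a.symm hai hb'i) (hpair hbb' hbi hb'i)
  · have hpair : ∀ {d d' e}, d ≠ d' → d ≠ e → d' ≠ e → d ≠ i → d' ≠ i → e ≠ i →
        Pi.single d 1 + Pi.single d' 1 ∈ vectorSpan ℝ (demicube N ∩ {x | x i = -(1/2)}) :=
      fun {_ _ e} hdd' hde hd'e hdi hd'i hei => single_add_single_mem_vectorSpan (J := {e})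
        (by simp) hdd' (by simpa using hde) (by simpa using hd'e) hdi hd'i (by simp [vtx, hei.symm])
    exact Submodule.mem_of_add_mem_of_add_mem _ (hpair hba.symm hb'a.symm hbb' hai hbi hb'i)
      (hpair hb'a.symm hba.symm hbb'.symm hai hb'i hbi) (hpair hbb' hba hb'a hbi hb'i hai)

theorem mem_vectorSpan_H_face {I : Finset (Fin N)} (hI : Even #I) {x : Fin N → ℝ}
    (hx : signVec I ⬝ᵥ x = 0) : x ∈ vectorSpan ℝ (demicube N ∩ {x | Hfun I x = 1}) := by
  have hrange : Set.range (fun a => vtx (I ∆ {a})) ⊆ demicube N ∩ {x | Hfun I x = 1} := by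
    rintro _ ⟨a, rfl⟩
    refine ⟨vtx_mem_demicube ?_, by simp [Hfun_vtx]⟩
    simpa [← Nat.not_even_iff_odd, even_card_symmDiff_iff] using hI
  have hw : ∑ a, signVec I a * x a = 0 := hx
  have := vectorSpan_mono ℝ hrange (weightedVSub_mem_vectorSpan hw _)
  rw [weightedVSub_eq_linear_combination _ hw] at this
  convert this
  simp only [vtx_symmDiff_singleton, smul_add, sum_add_distrib, ← sum_smul, hw, zero_smul,
    zero_add, smul_smul]
  conv_lhs => rw [← univ_sum_single x]
  refine sum_congr rfl fun a _ => ?_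
  rw [mul_right_comm, signVec_mul_self, one_mul]
  ext j
  simp [Pi.single_apply]

theorem inter_coord_eq_half_mem_demicubeFacets (hN : 4 ≤ N) (i : Fin N) :
    demicube N ∩ {x | x i = 1/2} ∈ demicubeFacets N := by
  obtain ⟨k, -, -, hki, -⟩ := exists_ne_ne (by simpa using hN) i i
  have hset : {x : Fin N → ℝ | x i = 1/2} = {x | Pi.single i 1 ⬝ᵥ x = 1/2} := by
    simp [single_dotProduct]
  rw [hset]
  refine inter_mem_demicubeFacets (J₀ := {i}) (J₁ := {k}) (by simp) (fun J _ => ?_) (by simp)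
    (by simp [vtx]) (by simp) (by simp [vtx, hki.symm]; norm_num) fun x hx => ?_
  · simp only [single_dotProduct, one_mul, vtx]
    split_ifs <;> norm_num
  · rw [← hset]
    exact mem_vectorSpan_coordinate_face hN (.inl rfl) (by simpa using hx)

theorem inter_coord_eq_neg_half_mem_demicubeFacets (hN : 4 ≤ N) (i : Fin N) :
    demicube N ∩ {x | x i = -(1/2)} ∈ demicubeFacets N := by
  obtain ⟨k, -, -, hki, -⟩ := exists_ne_ne (by simpa using hN) i i
  have hset : {x : Fin N → ℝ | x i = -(1/2)} = {x | Pi.single i (-1) ⬝ᵥ x = 1/2} := by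
    ext x
    simp only [Set.mem_ofPred_eq, single_dotProduct, neg_one_mul, neg_eq_iff_eq_neg]
  rw [hset]
  refine inter_mem_demicubeFacets (J₀ := {k}) (J₁ := {i}) (by simp) (fun J _ => ?_) (by simp)
    (by simp [vtx, hki.symm]) (by simp) (by simp [vtx]; norm_num) fun x hx => ?_
  · simp only [single_dotProduct, neg_one_mul, vtx]
    split_ifs <;> norm_num
  · rw [← hset]
    exact mem_vectorSpan_coordinate_face hN (.inr rfl) (by simpa using hx)

theorem inter_Hfun_eq_one_mem_demicubeFacets (hN : 4 ≤ N) {I : Finset (Fin N)} (hI : Even #I) :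
    demicube N ∩ {x | Hfun I x = 1} ∈ demicubeFacets N := by
  have hval : ∀ x, -signVec I ⬝ᵥ x = N / 2 - Hfun I x := fun x => by
    rw [neg_dotProduct, Hfun_eq_dotProduct]; ring
  have hset : {x | Hfun I x = 1} = {x | -signVec I ⬝ᵥ x = N / 2 - 1} := by
    simp only [hval, sub_right_inj]
  have hodd : ∀ T : Finset (Fin N), Odd #T → Odd #(I ∆ T) := fun T hT => by
    simpa [← Nat.not_even_iff_odd, even_card_symmDiff_iff, hI] using hT
  have a₀ : Fin N := ⟨0, by omega⟩
  obtain ⟨a, a', haa', ha, -, ha', -⟩ := exists_ne_ne (by simpa using hN) a₀ a₀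
  have hcard : #{a₀, a, a'} = 3 := card_eq_three.2 ⟨a₀, a, a', ha.symm, ha'.symm, haa', rfl⟩
  rw [hset]
  refine inter_mem_demicubeFacets (J₀ := I ∆ {a₀}) (J₁ := I ∆ {a₀, a, a'}) ?_ (fun J hJ => ?_)
    (hodd _ (by simp)) (by simp [hval, Hfun_vtx]) (hodd _ (by rw [hcard]; decide))
    (by simp [hval, Hfun_vtx, hcard]) fun x hx => ?_
  · intro h
    have := congrFun h a₀
    simp only [Pi.neg_apply, Pi.zero_apply, neg_eq_zero, signVec] at this
    split_ifs at this <;> norm_num at this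
  · rw [hval, Hfun_vtx]
    have : (1 : ℝ) ≤ #(I ∆ J) := by exact_mod_cast (hodd J hJ).pos
    linarith
  · rw [← hset]
    exact mem_vectorSpan_H_face hI (by simpa using hx)

abbrev FacetIndex (N : ℕ) := (Fin N × Bool) ⊕ {I : Finset (Fin N) // Even #I}

noncomputable def facetOf : FacetIndex N → Set (Fin N → ℝ)
  | .inl (i, true) => demicube N ∩ {α | α i = 1/2}
  | .inl (i, false) => demicube N ∩ {α | α i = -(1/2)}
  | .inr I => demicube N ∩ {α | Hfun I.1 α = 1}

def facetVertices : FacetIndex N → Set (Finset (Fin N))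
  | .inl (i, true) => {J | i ∈ J}
  | .inl (i, false) => {J | i ∉ J}
  | .inr I => {J | #(I.1 ∆ J) = 1}

theorem vtx_mem_facetOf_iff (x : FacetIndex N) {J : Finset (Fin N)} (hJ : Odd #J) :
    vtx J ∈ facetOf x ↔ J ∈ facetVertices x := by
  rcases x with ⟨i, _ | _⟩ | I
  · by_cases hi : i ∈ J <;> simp [facetOf, facetVertices, vtx_mem_demicube hJ, vtx, hi]
    norm_num
  · by_cases hi : i ∈ J <;> simp [facetOf, facetVertices, vtx_mem_demicube hJ, vtx, hi]
    norm_num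
  · simp [facetOf, facetVertices, vtx_mem_demicube hJ, Hfun_vtx]

theorem eq_of_forall_mem_facetVertices_iff (hN : 4 ≤ N) {x y : FacetIndex N}
    (h : ∀ J : Finset (Fin N), Odd #J → (J ∈ facetVertices x ↔ J ∈ facetVertices y)) :
    x = y := by
  have : Nontrivial (Fin N) := Fin.nontrivial_iff_two_le.2 (by omega)
  have hflip : ∀ I : Finset (Fin N), Even #I → ∀ a, Odd #(I ∆ {a}) := fun I hI a => by
    simpa [← Nat.not_even_iff_odd, even_card_symmDiff_iff] using hI
  rcases x with ⟨i, _ | _⟩ | ⟨I, hI⟩ <;> rcases y with ⟨j, _ | _⟩ | ⟨I', hI'⟩ <;>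
    simp only [facetVertices, Set.mem_ofPred_eq] at h
  · simpa [eq_comm] using h {i} (by simp)
  · obtain ⟨k, -, -, hki, hkj, -⟩ := exists_ne_ne (by simpa using hN) i j
    simpa [hki.symm, hkj.symm] using h {k} (by simp)
  · obtain ⟨a, ha⟩ := exists_mem_symmDiff_singleton_iff I' i True
    simpa [ha] using h _ (hflip I' hI' a)
  · obtain ⟨k, -, -, hki, hkj, -⟩ := exists_ne_ne (by simpa using hN) i j
    simpa [hki.symm, hkj.symm] using h {k} (by simp)
  · simpa [eq_comm] using h {i} (by simp)
  · obtain ⟨a, ha⟩ := exists_mem_symmDiff_singleton_iff I' i False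
    simpa [ha] using h _ (hflip I' hI' a)
  · obtain ⟨a, ha⟩ := exists_mem_symmDiff_singleton_iff I j True
    simpa [ha] using h _ (hflip I hI a)
  · obtain ⟨a, ha⟩ := exists_mem_symmDiff_singleton_iff I j False
    simpa [ha] using h _ (hflip I hI a)
  · have hD : ∀ a, #(I' ∆ I ∆ {a}) = 1 := fun a => by
      simpa [symmDiff_assoc] using h _ (hflip I hI a)
    have := eq_empty_of_forall_card_symmDiff_singleton_eq_one (by simp; omega) hD
    rw [← bot_eq_empty, symmDiff_eq_bot] at this
    subst this
    rfl

theorem facetOf_injective (hN : 4 ≤ N) : Function.Injective (facetOf (N := N)) :=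
  fun x y hxy => eq_of_forall_mem_facetVertices_iff hN fun J hJ => by
    rw [← vtx_mem_facetOf_iff x hJ, ← vtx_mem_facetOf_iff y hJ, hxy]

theorem range_facetOf :
    Set.range (facetOf (N := N)) =
      {F | ∃ i : Fin N, F = demicube N ∩ {α | α i = 1/2} ∨ F = demicube N ∩ {α | α i = -(1/2)}}
        ∪ {F | ∃ I : Finset (Fin N), Even #I ∧ F = demicube N ∩ {α | Hfun I α = 1}} := by
  ext F
  constructor
  · rintro ⟨⟨i, _ | _⟩ | ⟨I, hI⟩, rfl⟩
    exacts [.inl ⟨i, .inr rfl⟩, .inl ⟨i, .inl rfl⟩, .inr ⟨I, hI, rfl⟩]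
  · rintro (⟨i, rfl | rfl⟩ | ⟨I, hI, rfl⟩)
    exacts [⟨.inl (i, true), rfl⟩, ⟨.inl (i, false), rfl⟩, ⟨.inr ⟨I, hI⟩, rfl⟩]

theorem demicubeFacets_eq (hN : 4 ≤ N) :
    demicubeFacets N =
      {F | ∃ i : Fin N, F = demicube N ∩ {α | α i = 1/2} ∨ F = demicube N ∩ {α | α i = -(1/2)}}
        ∪ {F | ∃ I : Finset (Fin N), Even #I ∧ F = demicube N ∩ {α | Hfun I α = 1}} := by
  ext F
  refine ⟨exists_eq_of_mem_demicubeFacets (by omega), ?_⟩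
  rintro (⟨i, rfl | rfl⟩ | ⟨I, hI, rfl⟩)
  exacts [inter_coord_eq_half_mem_demicubeFacets hN i,
    inter_coord_eq_neg_half_mem_demicubeFacets hN i, inter_Hfun_eq_one_mem_demicubeFacets hN hI]

end Demicube

/-- The `N`-dimensional demihypercube (`N ≥ 4`) has exactly `2^{N-1} + 2N` facets:
`2N` supported on the hyperplanes `α_i = ±1/2` and `2^{N-1}` supported on the
hyperplanes `H_I = 1` for `I` of even cardinality. -/
theorem stmt_3 (N : ℕ) (hN : 4 ≤ N) :
    demicubeFacets N
      = ({F | ∃ i : Fin N, F = demicube N ∩ {α | α i = 1/2} ∨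
            F = demicube N ∩ {α | α i = -(1/2)}}
        ∪ {F | ∃ I : Finset (Fin N), Even I.card ∧
            F = demicube N ∩ {α | Hfun I α = 1}}) ∧
    Nat.card (demicubeFacets N) = 2^(N-1) + 2*N := by
  refine ⟨Demicube.demicubeFacets_eq hN, ?_⟩
  have : Nonempty (Fin N) := ⟨⟨0, by omega⟩⟩
  rw [Demicube.demicubeFacets_eq hN, ← Demicube.range_facetOf,
    Nat.card_range_of_injective (Demicube.facetOf_injective hN), Nat.card_sum, Nat.card_prod,
    Nat.card_finset_even_card]
  simp
  ring
end

section
/- For I of even cardinality, the facet of the demihypercube Δ supported on the hyperplane (H_I = 1) is an (N-1)-dimensional simplex, namely the convex hull of the N vertices v_J with |J| odd at graph distance 1 from v_I (i.e., with |I Δ J| = 1). -/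
open Finset

/-!
On the odd vertices of the cube the affine function `H_I` takes the value `|I Δ J|` at `v_J`,
which is odd (since `|I|` is even) and hence at least `1`. So `(H_I = 1)` is a supporting
hyperplane of `Δ`, and the face it cuts out is the convex hull of the vertices on it, i.e. of the
`v_J` with `|I Δ J| = 1`.
-/

noncomputable def hfunAffineMap {N : ℕ} (I : Finset (Fin N)) : (Fin N → ℝ) →ᵃ[ℝ] ℝ where
  toFun := Hfun I
  linear := ∑ j ∈ Iᶜ, LinearMap.proj j - ∑ i ∈ I, LinearMap.proj i
  map_vadd' α v := by
    simp only [Hfun, vadd_eq_add, Pi.add_apply, LinearMap.sub_apply, LinearMap.sum_apply,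
      LinearMap.proj_apply, sum_add_distrib, sum_sub_distrib]
    ring

theorem coe_hfunAffineMap {N : ℕ} (I : Finset (Fin N)) : ⇑(hfunAffineMap I) = Hfun I := rfl

theorem Hfun_vtx {N : ℕ} (I J : Finset (Fin N)) :
    Hfun I (vtx J) = #(I \ J) + #(J \ I) := by
  have hind : Hfun I (vtx J) =
      ∑ j ∈ Iᶜ, (if j ∈ J then 1 else 0) + ∑ i ∈ I, (if i ∉ J then 1 else 0) := by
    unfold Hfun vtx
    congr 1 <;> refine sum_congr rfl fun j _ => ?_ <;> split_ifs <;> norm_num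
  rw [hind, sum_boole, sum_boole, add_comm]
  congr 3 <;> ext <;> simp [and_comm]

theorem odd_card_sdiff_add_card_sdiff {α : Type*} [DecidableEq α] {I J : Finset α}
    (hI : Even #I) (hJ : Odd #J) :
    Odd (#(I \ J) + #(J \ I)) := by
  have hIJ := card_sdiff_add_card_inter I J
  have hJI := card_sdiff_add_card_inter J I
  rw [inter_comm] at hJI
  obtain ⟨a, ha⟩ := hI
  obtain ⟨b, hb⟩ := hJ
  exact ⟨a + b - #(I ∩ J), by omega⟩

theorem convexHull_inter_eq_convexHull_of_forall_le {𝕜 E : Type*} [Field 𝕜] [LinearOrder 𝕜]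
    [IsStrictOrderedRing 𝕜] [AddCommGroup E] [Module 𝕜 E] (f : E →ᵃ[𝕜] 𝕜) {s : Set E} {c : 𝕜}
    (hs : ∀ x ∈ s, c ≤ f x) :
    convexHull 𝕜 s ∩ {x | f x = c} = convexHull 𝕜 {x ∈ s | f x = c} := by
  refine Set.Subset.antisymm ?_ ?_
  · -- This set is convex: if `f = c` at a convex combination, then `f = c` at each endpoint
    -- carrying positive weight.
    suffices convexHull 𝕜 s ⊆ {x | c ≤ f x ∧ (f x = c → x ∈ convexHull 𝕜 {x ∈ s | f x = c})} from
      fun x ⟨hx, hfx⟩ => (this hx).2 hfx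
    refine convexHull_min (fun x hx => ⟨hs x hx, fun hfx => subset_convexHull 𝕜 _ ⟨hx, hfx⟩⟩) ?_
    rintro x ⟨hcx, hx⟩ y ⟨hcy, hy⟩ a b ha hb hab
    have hsplit : f (a • x + b • y) - c = a * (f x - c) + b * (f y - c) := by
      rw [Convex.combo_affine_apply hab, smul_eq_mul, smul_eq_mul]
      linear_combination c * hab
    have hax := mul_nonneg ha (sub_nonneg.2 hcx)
    have hby := mul_nonneg hb (sub_nonneg.2 hcy)
    refine ⟨by linarith, fun heq => ?_⟩
    obtain rfl | hfx := mul_eq_zero.1 (by linarith : a * (f x - c) = 0)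
    · obtain rfl : b = 1 := by linarith
      simp only [zero_smul, one_smul, zero_add] at heq ⊢
      exact hy heq
    obtain rfl | hfy := mul_eq_zero.1 (by linarith : b * (f y - c) = 0)
    · obtain rfl : a = 1 := by linarith
      simp only [zero_smul, one_smul, add_zero] at heq ⊢
      exact hx heq
    exact convex_convexHull 𝕜 _ (hx (sub_eq_zero.1 hfx)) (hy (sub_eq_zero.1 hfy)) ha hb hab
  · exact convexHull_min (fun x hx => ⟨subset_convexHull 𝕜 s hx.1, hx.2⟩)
      ((convex_convexHull 𝕜 s).inter ((convex_singleton c).affine_preimage f))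

theorem stmt_4_general (N : ℕ) (I : Finset (Fin N)) (hI : Even I.card) :
    demicube N ∩ {α | Hfun I α = 1}
      = convexHull ℝ {x : Fin N → ℝ | ∃ J : Finset (Fin N), Odd J.card ∧
          (I \ J).card + (J \ I).card = 1 ∧ x = vtx J} := by
  have hge : ∀ x ∈ {x : Fin N → ℝ | ∃ J : Finset (Fin N), Odd #J ∧ x = vtx J},
      1 ≤ hfunAffineMap I x := by
    rintro _ ⟨J, hJ, rfl⟩
    rw [coe_hfunAffineMap, Hfun_vtx]
    exact_mod_cast (odd_card_sdiff_add_card_sdiff hI hJ).pos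
  rw [demicube, ← coe_hfunAffineMap, convexHull_inter_eq_convexHull_of_forall_le _ hge]
  congr 1
  ext x
  simp only [Set.mem_ofPred_eq, coe_hfunAffineMap]
  constructor
  · rintro ⟨⟨J, hJ, rfl⟩, h⟩
    exact ⟨J, hJ, by exact_mod_cast (Hfun_vtx I J).symm.trans h, rfl⟩
  · rintro ⟨J, hJ, h, rfl⟩
    exact ⟨⟨J, hJ, rfl⟩, by rw [Hfun_vtx]; exact_mod_cast h⟩

/-- For `I` of even cardinality, the facet of the demihypercube supported on
`(H_I = 1)` is the simplex spanned by the `N` odd vertices `v_J` at graph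
distance `1` from `v_I` (i.e. with `|I Δ J| = 1`). -/
theorem stmt_4 (N : ℕ) (hN : 4 ≤ N) (I : Finset (Fin N)) (hI : Even I.card) :
    demicube N ∩ {α | Hfun I α = 1}
      = convexHull ℝ {x : Fin N → ℝ | ∃ J : Finset (Fin N), Odd J.card ∧
          (I \ J).card + (J \ I).card = 1 ∧ x = vtx J} :=
  stmt_4_general N I hI
end
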